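/- Let X be a real Banach space, φ a strictly convex increasing function on [0,∞) with φ(0)=0, and r a symmetric random variable with ‖r‖_∞ = 1. A point x in the unit sphere of X is an extreme point of the closed unit ball if and only if: for every y ∈ X, E[φ(‖x + r y‖)] = φ(1) implies y = 0. -/

import Mathlib

/-!
Since `‖x + u‖ + ‖x - u‖ ≥ 2` for a unit vector `x`, strict convexity and monotonicity of `φ`
give `φ ‖x + u‖ + φ ‖x - u‖ ≥ 2 φ 1`, with equality only when both norms are `1`. The symmetry
of `r` turns `E φ ‖x + r y‖ = φ 1` into `E (φ ‖x + r y‖ + φ ‖x - r y‖) = 2 φ 1`, so almost surely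
`‖x ± r y‖ = 1`; as `r ≠ 0` with positive probability, extremality forces `y = 0`. Conversely,
if `‖x ± y‖ ≤ 1` then `‖x + t y‖ = 1` for all `|t| ≤ 1`, so `E φ ‖x + r y‖ = φ 1` because `|r| ≤ 1`.
-/

open MeasureTheory ProbabilityTheory Set
open scoped ENNReal NNReal

section RealFunctions

variable {φ : ℝ → ℝ} {s : Set ℝ}

theorem ConvexOn.map_add_div_two_le (hφ : ConvexOn ℝ s φ) {a b : ℝ} (ha : a ∈ s) (hb : b ∈ s) :
    φ ((a + b) / 2) ≤ (φ a + φ b) / 2 := by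
  have h := hφ.2 ha hb (by norm_num : (0 : ℝ) ≤ 1 / 2) (by norm_num : (0 : ℝ) ≤ 1 / 2)
    (by norm_num)
  rw [smul_eq_mul, smul_eq_mul, smul_eq_mul, smul_eq_mul] at h
  rw [show (a + b) / 2 = 1 / 2 * a + 1 / 2 * b by ring]
  linarith

theorem StrictConvexOn.map_add_div_two_lt (hφ : StrictConvexOn ℝ s φ) {a b : ℝ}
    (ha : a ∈ s) (hb : b ∈ s) (hab : a ≠ b) : φ ((a + b) / 2) < (φ a + φ b) / 2 := by
  have h := hφ.2 ha hb hab (by norm_num : (0 : ℝ) < 1 / 2) (by norm_num : (0 : ℝ) < 1 / 2)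
    (by norm_num)
  rw [smul_eq_mul, smul_eq_mul, smul_eq_mul, smul_eq_mul] at h
  rw [show (a + b) / 2 = 1 / 2 * a + 1 / 2 * b by ring]
  linarith

theorem StrictConvexOn.strictMonoOn_of_monotoneOn (hφ : StrictConvexOn ℝ s φ)
    (hφm : MonotoneOn φ s) : StrictMonoOn φ s := by
  intro a ha b hb hab
  refine (hφm ha hb hab.le).lt_of_ne fun heq => ?_
  have hmid : (a + b) / 2 ∈ s := hφ.1.ordConnected.out ha hb ⟨by linarith, by linarith⟩
  linarith [hφm ha hmid (by linarith), hφ.map_add_div_two_lt ha hb hab.ne]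

theorem ConvexOn.two_mul_le_add_of_monotoneOn (hφ : ConvexOn ℝ (Ici 0) φ)
    (hφm : MonotoneOn φ (Ici 0)) {a b c : ℝ} (ha : 0 ≤ a) (hb : 0 ≤ b) (hc : 0 ≤ c)
    (habc : 2 * c ≤ a + b) : 2 * φ c ≤ φ a + φ b := by
  have := hφm hc (show 0 ≤ (a + b) / 2 by positivity) (by linarith)
  linarith [hφ.map_add_div_two_le (s := Ici 0) ha hb]

theorem StrictConvexOn.eq_of_add_le_two_mul (hφ : StrictConvexOn ℝ (Ici 0) φ)
    (hφm : MonotoneOn φ (Ici 0)) {a b c : ℝ} (ha : 0 ≤ a) (hb : 0 ≤ b) (hc : 0 ≤ c)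
    (habc : 2 * c ≤ a + b) (hφabc : φ a + φ b ≤ 2 * φ c) : a = c ∧ b = c := by
  obtain rfl | hne := eq_or_ne a b
  · have : a ≤ c := (hφ.strictMonoOn_of_monotoneOn hφm).le_iff_le ha hc |>.1 (by linarith)
    exact ⟨by linarith, by linarith⟩
  · have := hφm hc (show 0 ≤ (a + b) / 2 by positivity) (by linarith)
    linarith [hφ.map_add_div_two_lt (s := Ici 0) ha hb hne]

end RealFunctions

section NormedSpace

variable {E : Type*} [SeminormedAddCommGroup E] [NormedSpace ℝ E]

theorem two_mul_norm_le_norm_add_add_norm_sub (x u : E) : 2 * ‖x‖ ≤ ‖x + u‖ + ‖x - u‖ := by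
  have := norm_add_le (x + u) (x - u)
  rwa [add_add_sub_cancel, ← two_smul ℝ x, norm_smul, Real.norm_two] at this

theorem norm_add_smul_le_max {x y : E} {t : ℝ} (ht : |t| ≤ 1) :
    ‖x + t • y‖ ≤ max ‖x + y‖ ‖x - y‖ := by
  obtain ⟨ht₁, ht₂⟩ := abs_le.1 ht
  exact convexOn_univ_norm.le_on_segment (mem_univ _) (mem_univ _)
    ⟨(1 + t) / 2, (1 - t) / 2, by linarith, by linarith, by ring, by module⟩

theorem norm_add_smul_eq_one {x y : E} (hx : ‖x‖ = 1) (hy : max ‖x + y‖ ‖x - y‖ = 1) {t : ℝ}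
    (ht : |t| ≤ 1) : ‖x + t • y‖ = 1 := by
  have hplus : ‖x + t • y‖ ≤ 1 := hy ▸ norm_add_smul_le_max ht
  have hminus : ‖x - t • y‖ ≤ 1 := by
    have := norm_add_smul_le_max (x := x) (y := y) ((abs_neg t).trans_le ht)
    rwa [neg_smul, ← sub_eq_add_neg, hy] at this
  linarith [hx ▸ two_mul_norm_le_norm_add_add_norm_sub x (t • y)]

end NormedSpace

section Measure

variable {α : Type*} [MeasurableSpace α] {μ : Measure α}

theorem ae_norm_le_of_eLpNorm_top_le {E : Type*} [NormedAddCommGroup E] {f : α → E} {C : ℝ≥0}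
    (h : eLpNorm f ∞ μ ≤ C) : ∀ᵐ a ∂μ, ‖f a‖ ≤ C := by
  filter_upwards [ae_le_eLpNormEssSup (f := f) (μ := μ)] with a ha
  rw [← eLpNorm_exponent_top] at ha
  exact_mod_cast enorm_le_coe.1 (ha.trans h)

theorem frequently_ne_zero_of_eLpNorm_ne_zero {E : Type*} [NormedAddCommGroup E] {f : α → E}
    {p : ℝ≥0∞} (h : eLpNorm f p μ ≠ 0) : ∃ᵐ a ∂μ, f a ≠ 0 := fun h0 =>
  h <| (eLpNorm_congr_ae (h0.mono fun _ => not_not.1)).trans eLpNorm_zero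

theorem MonotoneOn.measurable_comp_of_nonneg {φ : ℝ → ℝ} (hφ : MonotoneOn φ (Ici 0))
    {f : α → ℝ} (hf : Measurable f) (hf0 : ∀ a, 0 ≤ f a) : Measurable fun a => φ (f a) := by
  have hmono : Monotone fun t => φ (max t 0) := fun s t hst =>
    hφ (le_max_right s 0) (le_max_right t 0) (max_le_max_right 0 hst)
  have hext : (fun a => φ (f a)) = (fun t => φ (max t 0)) ∘ f :=
    funext fun a => by rw [Function.comp_apply, max_eq_left (hf0 a)]
  exact hext ▸ hmono.measurable.comp hf

end Measure

section RandomPerturbation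

variable {Ω : Type*} [MeasurableSpace Ω] {P : Measure Ω} {r : Ω → ℝ}
  {E : Type*} [NormedAddCommGroup E] [NormedSpace ℝ E] {φ : ℝ → ℝ}

theorem integrable_comp_norm_add_smul [IsFiniteMeasure P] (hφ : MonotoneOn φ (Ici 0))
    (hr : Measurable r) (hr1 : ∀ᵐ ω ∂P, |r ω| ≤ 1) (x y : E) :
    Integrable (fun ω => φ ‖x + r ω • y‖) P := by
  have hmeas : Measurable fun ω => φ ‖x + r ω • y‖ :=
    (hφ.measurable_comp_of_nonneg (by fun_prop : Continuous fun t : ℝ => ‖x + t • y‖).measurable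
      fun _ => norm_nonneg _).comp hr
  refine .of_bound hmeas.aestronglyMeasurable (max |φ 0| |φ (‖x‖ + ‖y‖)|) ?_
  filter_upwards [hr1] with ω hω
  have hsmul : ‖r ω • y‖ ≤ ‖y‖ := by
    rw [norm_smul, Real.norm_eq_abs]
    exact mul_le_of_le_one_left (norm_nonneg y) hω
  have hle : ‖x + r ω • y‖ ≤ ‖x‖ + ‖y‖ := by linarith [norm_add_le x (r ω • y)]
  exact abs_le_max_abs_abs (hφ self_mem_Ici (norm_nonneg _) (norm_nonneg _))
    (hφ (norm_nonneg _) (add_nonneg (norm_nonneg _) (norm_nonneg _)) hle)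

theorem ae_norm_add_smul_eq_one_of_integral_eq [IsProbabilityMeasure P] (hr : Measurable r)
    (hsymm : P.map r = P.map (fun ω => -r ω)) (hr1 : ∀ᵐ ω ∂P, |r ω| ≤ 1)
    (hφ : StrictConvexOn ℝ (Ici 0) φ) (hφm : MonotoneOn φ (Ici 0)) {x y : E} (hx : ‖x‖ = 1)
    (h : ∫ ω, φ ‖x + r ω • y‖ ∂P = φ 1) :
    ∀ᵐ ω ∂P, ‖x + r ω • y‖ = 1 ∧ ‖x - r ω • y‖ = 1 := by
  have hsub : ∫ ω, φ ‖x - r ω • y‖ ∂P = φ 1 := by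
    have hident : IdentDistrib r (fun ω => -r ω) P P :=
      ⟨hr.aemeasurable, hr.neg.aemeasurable, hsymm⟩
    have hg : Measurable fun t : ℝ => φ ‖x + t • y‖ :=
      hφm.measurable_comp_of_nonneg (by fun_prop : Continuous fun t : ℝ => ‖x + t • y‖).measurable
        fun _ => norm_nonneg _
    simpa only [Function.comp_def, neg_smul, ← sub_eq_add_neg, h] using
      (hident.comp hg).integral_eq.symm
  have hplus_int := integrable_comp_norm_add_smul hφm hr hr1 x y
  have hminus_int : Integrable (fun ω => φ ‖x - r ω • y‖) P := by
    simpa only [smul_neg, ← sub_eq_add_neg] using integrable_comp_norm_add_smul hφm hr hr1 x (-y)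
  have hnorm_sum (ω : Ω) : 2 * 1 ≤ ‖x + r ω • y‖ + ‖x - r ω • y‖ :=
    hx ▸ two_mul_norm_le_norm_add_add_norm_sub x (r ω • y)
  have hsum : (fun _ => 2 * φ 1) =ᵐ[P] fun ω => φ ‖x + r ω • y‖ + φ ‖x - r ω • y‖ := by
    refine (integral_eq_iff_of_ae_le (integrable_const _) (hplus_int.add hminus_int)
      (ae_of_all _ fun ω => ?_)).1 ?_
    · exact hφ.convexOn.two_mul_le_add_of_monotoneOn hφm (norm_nonneg _) (norm_nonneg _)
        zero_le_one (hnorm_sum ω)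
    · simp only [Pi.add_apply]
      rw [integral_const, integral_add hplus_int hminus_int, h, hsub, probReal_univ, one_smul,
        two_mul]
  filter_upwards [hsum] with ω hω
  exact hφ.eq_of_add_le_two_mul hφm (norm_nonneg _) (norm_nonneg _) zero_le_one (hnorm_sum ω)
    hω.ge

end RandomPerturbation

theorem stmt10_general {Ω : Type*} [MeasurableSpace Ω] (P : Measure Ω) [IsProbabilityMeasure P]
    {X : Type*} [NormedAddCommGroup X] [NormedSpace ℝ X]
    (r : Ω → ℝ) (hmeas : Measurable r)
    (hsymm : Measure.map r P = Measure.map (fun ω => -(r ω)) P)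
    (hnorm : eLpNorm r ⊤ P = 1)
    (φ : ℝ → ℝ) (hφ : StrictConvexOn ℝ (Set.Ici 0) φ)
    (hφm : MonotoneOn φ (Set.Ici 0))
    (x : X) (hx : ‖x‖ = 1) :
    (∀ y : X, max ‖x + y‖ ‖x - y‖ = 1 → y = 0) ↔
      (∀ y : X, ∫ ω, φ ‖x + r ω • y‖ ∂P = φ 1 → y = 0) := by
  have hr1 : ∀ᵐ ω ∂P, |r ω| ≤ 1 := by
    filter_upwards [ae_norm_le_of_eLpNorm_top_le (C := 1) (by rw [hnorm, ENNReal.coe_one])]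
      with ω hω
    exact_mod_cast (Real.norm_eq_abs _).symm.trans_le hω
  constructor
  · intro hext y hy
    have hr0 : ∃ᵐ ω ∂P, r ω ≠ 0 := frequently_ne_zero_of_eLpNorm_ne_zero (hnorm ▸ one_ne_zero)
    have hunit := ae_norm_add_smul_eq_one_of_integral_eq hmeas hsymm hr1 hφ hφm hx hy
    obtain ⟨ω, hω0, hω⟩ := (hr0.and_eventually hunit).exists
    exact (smul_eq_zero.1 (hext _ (by rw [hω.1, hω.2, max_self]))).resolve_left hω0
  · intro hcond y hy
    refine hcond y ?_
    have hae : ∀ᵐ ω ∂P, φ ‖x + r ω • y‖ = φ 1 :=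
      hr1.mono fun ω hω => by rw [norm_add_smul_eq_one hx hy hω]
    rw [integral_congr_ae hae, integral_const, probReal_univ, one_smul]

theorem stmt10 {Ω : Type*} [MeasurableSpace Ω] (P : Measure Ω) [IsProbabilityMeasure P]
    {X : Type*} [NormedAddCommGroup X] [NormedSpace ℝ X]
    (r : Ω → ℝ) (hmeas : Measurable r)
    (hsymm : Measure.map r P = Measure.map (fun ω => -(r ω)) P)
    (hnorm : eLpNorm r ⊤ P = 1)
    (φ : ℝ → ℝ) (hφ : StrictConvexOn ℝ (Set.Ici 0) φ)
    (hφm : MonotoneOn φ (Set.Ici 0)) (hφ0 : φ 0 = 0)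
    (x : X) (hx : ‖x‖ = 1) :
    (∀ y : X, max ‖x + y‖ ‖x - y‖ = 1 → y = 0) ↔
      (∀ y : X, ∫ ω, φ ‖x + r ω • y‖ ∂P = φ 1 → y = 0) :=
  stmt10_general P r hmeas hsymm hnorm φ hφ hφm x hx
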